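/- Let x ∈ 𝔹 with F(x) ≠ 0 (i.e. x is not a Z-eigenvector of A), let B : E → E be a symmetric positive definite linear map, and set d := −B⁻¹ F(x). Then ⟪A x^{m-1}, P_x d⟫ = −⟪F(x), B⁻¹ F(x)⟫ < 0; consequently, for every σ ∈ (0,1) there exists ᾱ > 0 such that φ(x(α)) ≤ φ(x) − σ α ⟪F(x), B⁻¹ F(x)⟫ < φ(x) for all α ∈ (0, ᾱ], so d is a curve descent direction of φ at x. -/

import Mathlib

open scoped RealInnerProductSpace

noncomputable section

/-- Euclidean space `ℝ^n`. -/
abbrev Euc (n : ℕ) : Type := EuclideanSpace ℝ (Fin n)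

/-- An `m`-th order tensor on `ℝ^n`, viewed as a continuous `m`-multilinear form. -/
abbrev Tensor (m n : ℕ) : Type := ContinuousMultilinearMap ℝ (fun _ : Fin m => Euc n) ℝ

/-- A tensor is symmetric if it is invariant under every permutation of its arguments. -/
def IsSymmTensor {m n : ℕ} (A : Tensor m n) : Prop :=
  ∀ (e : Equiv.Perm (Fin m)) (v : Fin m → Euc n), A (v ∘ e) = A v

/-- `A x^m`, the homogeneous form `A (x, …, x)`. -/
def tpow {m n : ℕ} (A : Tensor m n) (x : Euc n) : ℝ := A (fun _ => x)

/-- The last index of `Fin m`. -/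
def lastIdx {m : ℕ} (_hm : 2 ≤ m) : Fin m := ⟨m - 1, by omega⟩

/-- The second to last index of `Fin m`. -/
def sndIdx {m : ℕ} (_hm : 2 ≤ m) : Fin m := ⟨m - 2, by omega⟩

lemma sndIdx_ne_lastIdx {m : ℕ} (hm : 2 ≤ m) : sndIdx hm ≠ lastIdx hm := by
  simp only [sndIdx, lastIdx, Fin.mk.injEq, ne_eq]
  omega

/-- `A x^{m-1}`: the unique vector with `⟪A x^{m-1}, v⟫ = A (x, …, x, v)` for all `v`. -/
def tvec {m n : ℕ} (A : Tensor m n) (hm : 2 ≤ m) (x : Euc n) : Euc n :=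
  (InnerProductSpace.toDual ℝ (Euc n)).symm
    (A.toContinuousLinearMap (fun _ => x) (lastIdx hm))

/-- `F(x) = A x^{m-1} - (A x^m) • x`. -/
def Fvec {m n : ℕ} (A : Tensor m n) (hm : 2 ≤ m) (x : Euc n) : Euc n :=
  tvec A hm x - tpow A x • x

/-- `φ(x) = (1/m) A x^m`. -/
def phi {m n : ℕ} (A : Tensor m n) (x : Euc n) : ℝ := (1 / (m : ℝ)) * tpow A x

/-- Orthogonal projection `P_x d = d - ⟪x, d⟫ x` (for `x` a unit vector). -/
def Pproj {n : ℕ} (x d : Euc n) : Euc n := d - ⟪x, d⟫ • x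

/-- `x(α) = (x + α d)/‖x + α d‖`, the projection of `x + α d` onto the unit sphere. -/
def xcur {n : ℕ} (x d : Euc n) (α : ℝ) : Euc n := ‖x + α • d‖⁻¹ • (x + α • d)

/-- `w(x, d)`: the unique vector with `⟪w(x, d), v⟫ = A (x, …, x, d, v)` for all `v`. -/
def wvec {m n : ℕ} (A : Tensor m n) (hm : 2 ≤ m) (x d : Euc n) : Euc n :=
  (InnerProductSpace.toDual ℝ (Euc n)).symm
    (A.toContinuousLinearMap (Function.update (fun _ => x) (sndIdx hm) d) (lastIdx hm))

/-- `A (x, …, x, d, d)`. -/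
def A2 {m n : ℕ} (A : Tensor m n) (hm : 2 ≤ m) (x d : Euc n) : ℝ :=
  A (Function.update (Function.update (fun _ => x) (sndIdx hm) d) (lastIdx hm) d)

lemma wvec_add {m n : ℕ} (A : Tensor m n) (hm : 2 ≤ m) (x d₁ d₂ : Euc n) :
    wvec A hm x (d₁ + d₂) = wvec A hm x d₁ + wvec A hm x d₂ := by
  unfold wvec
  rw [← map_add]
  congr 1
  ext v
  simp only [ContinuousMultilinearMap.toContinuousLinearMap_apply, ContinuousLinearMap.add_apply]
  rw [Function.update_comm (sndIdx_ne_lastIdx hm), Function.update_comm (sndIdx_ne_lastIdx hm),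
    Function.update_comm (sndIdx_ne_lastIdx hm)]
  exact A.map_update_add _ _ _ _

lemma wvec_smul {m n : ℕ} (A : Tensor m n) (hm : 2 ≤ m) (x : Euc n) (c : ℝ) (d : Euc n) :
    wvec A hm x (c • d) = c • wvec A hm x d := by
  unfold wvec
  rw [← map_smul]
  congr 1
  ext v
  simp only [ContinuousMultilinearMap.toContinuousLinearMap_apply,
    ContinuousLinearMap.smul_apply, smul_eq_mul]
  rw [Function.update_comm (sndIdx_ne_lastIdx hm), Function.update_comm (sndIdx_ne_lastIdx hm)]
  exact A.map_update_smul _ _ _ _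

/-- The Jacobian `F'(x) d = (m-1) w(x,d) - (A x^m) d - m ⟪A x^{m-1}, d⟫ x`. -/
def FderivL {m n : ℕ} (A : Tensor m n) (hm : 2 ≤ m) (x : Euc n) : Euc n →L[ℝ] Euc n :=
  LinearMap.toContinuousLinearMap
  { toFun := fun d =>
      ((m : ℝ) - 1) • wvec A hm x d - tpow A x • d - ((m : ℝ) * ⟪tvec A hm x, d⟫) • x
    map_add' := by
      intro d₁ d₂
      try simp only
      rw [wvec_add, inner_add_right]
      module
    map_smul' := by
      intro c d
      simp only [RingHom.id_apply]
      rw [wvec_smul, inner_smul_right]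
      module }

/-- A Newton direction at `x`: `⟪x, d⟫ = 0` and `P_x (F'(x) d + F(x)) = 0`. -/
def NewtonDir {m n : ℕ} (A : Tensor m n) (hm : 2 ≤ m) (x d : Euc n) : Prop :=
  ⟪x, d⟫ = 0 ∧ Pproj x (FderivL A hm x d + Fvec A hm x) = 0

/-- The residual function `θ(x) = (1/2)‖F(x)‖²`. -/
def theta {m n : ℕ} (A : Tensor m n) (hm : 2 ≤ m) (x : Euc n) : ℝ :=
  (1 / 2) * ‖Fvec A hm x‖ ^ 2

/-- Assumption (A): second-order sufficient condition at the KKT point `x̄`. -/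
def AssumpA {m n : ℕ} (A : Tensor m n) (hm : 2 ≤ m) (xb : Euc n) (lam : ℝ) : Prop :=
  ‖xb‖ = 1 ∧ tvec A hm xb = lam • xb ∧ lam = tpow A xb ∧
    ∀ d : Euc n, d ≠ 0 → ⟪xb, d⟫ = 0 →
      0 < ((m : ℝ) - 1) * A2 A hm xb d - lam * ‖d‖ ^ 2

end

/-!
Symmetry of `A` makes `A x^{m-1}` the gradient of `φ`, and the retraction `α ↦ x(α)` leaves
the unit vector `x` with velocity `P_x d`; so `α ↦ φ(x(α))` has derivative
`⟪A x^{m-1}, P_x d⟫ = ⟪F(x), d⟫ = -⟪F(x), B⁻¹ F(x)⟫` at `0`, the first equality because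
`A x^{m-1}` and `F(x)` differ by a multiple of `x`. Positive definiteness of `B` makes this
negative, and a function with negative derivative at `0` stays below the line of slope
`σ`-times that derivative on some interval `(0, ᾱ]`.
-/

lemma inner_tvec {m n : ℕ} (A : Tensor m n) (hm : 2 ≤ m) (x v : Euc n) :
    ⟪tvec A hm x, v⟫ = A (Function.update (fun _ => x) (lastIdx hm) v) := by
  simp [tvec, InnerProductSpace.toDual_symm_apply]

lemma inner_tvec_self {m n : ℕ} (A : Tensor m n) (hm : 2 ≤ m) (x : Euc n) :
    ⟪tvec A hm x, x⟫ = tpow A x := by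
  rw [inner_tvec, Function.update_eq_self]
  rfl

lemma inner_tvec_Pproj {m n : ℕ} (A : Tensor m n) (hm : 2 ≤ m) (x d : Euc n) :
    ⟪tvec A hm x, Pproj x d⟫ = ⟪Fvec A hm x, d⟫ := by
  rw [Pproj, Fvec, inner_sub_right, inner_sub_left, real_inner_smul_right,
    real_inner_smul_left, inner_tvec_self]
  ring

lemma IsSymmTensor.apply_update_eq_inner_tvec {m n : ℕ} {A : Tensor m n} (hA : IsSymmTensor A)
    (hm : 2 ≤ m) (x v : Euc n) (i : Fin m) :
    A (Function.update (fun _ => x) i v) = ⟪tvec A hm x, v⟫ := by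
  rw [inner_tvec, ← hA (Equiv.swap i (lastIdx hm))]
  congr 1
  funext j
  simp only [Function.comp_apply, Function.update_apply, Equiv.swap_apply_def]
  split_ifs <;> simp_all

lemma IsSymmTensor.hasFDerivAt_tpow {m n : ℕ} {A : Tensor m n} (hA : IsSymmTensor A)
    (hm : 2 ≤ m) (x : Euc n) :
    HasFDerivAt (tpow A) ((m : ℝ) • innerSL ℝ (tvec A hm x)) x := by
  have hdiag : HasFDerivAt (fun y : Euc n => fun _ : Fin m => y)
      (ContinuousLinearMap.pi fun _ => ContinuousLinearMap.id ℝ (Euc n)) x :=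
    (ContinuousLinearMap.pi fun _ => ContinuousLinearMap.id ℝ (Euc n)).hasFDerivAt
  refine ((A.hasFDerivAt (fun _ => x)).comp x hdiag).congr_fderiv ?_
  ext v
  simp [ContinuousMultilinearMap.linearDeriv_apply, hA.apply_update_eq_inner_tvec hm]

lemma IsSymmTensor.hasFDerivAt_phi {m n : ℕ} {A : Tensor m n} (hA : IsSymmTensor A)
    (hm : 2 ≤ m) (x : Euc n) :
    HasFDerivAt (phi A) (innerSL ℝ (tvec A hm x)) x := by
  have hm0 : (m : ℝ) ≠ 0 := by positivity
  refine ((hA.hasFDerivAt_tpow hm x).const_mul (1 / (m : ℝ))).congr_fderiv ?_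
  rw [smul_smul, one_div_mul_cancel hm0, one_smul]

lemma xcur_zero {n : ℕ} {x : Euc n} (hx : ‖x‖ = 1) (d : Euc n) : xcur x d 0 = x := by
  simp [xcur, hx]

lemma hasDerivAt_xcur {n : ℕ} {x : Euc n} (hx : ‖x‖ = 1) (d : Euc n) :
    HasDerivAt (xcur x d) (Pproj x d) 0 := by
  have hline : HasDerivAt (fun α : ℝ => x + α • d) d 0 := by
    simpa using ((hasDerivAt_id (0 : ℝ)).smul_const d).const_add x
  have hnorm : HasDerivAt (fun α : ℝ => ‖x + α • d‖) ⟪x, d⟫ 0 := by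
    have h := hline.norm_sq.sqrt (by simp [hx])
    simp only [Real.sqrt_sq (norm_nonneg _)] at h
    convert h using 1
    simp [hx]
  have hinv := hnorm.inv (by simp [hx])
  refine (hinv.smul hline).congr_deriv ?_
  simp [hx, Pproj, sub_eq_add_neg]

lemma IsSymmTensor.hasDerivAt_phi_xcur {m n : ℕ} {A : Tensor m n} (hA : IsSymmTensor A)
    (hm : 2 ≤ m) {x : Euc n} (hx : ‖x‖ = 1) (d : Euc n) :
    HasDerivAt (fun α => phi A (xcur x d α)) ⟪tvec A hm x, Pproj x d⟫ 0 := by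
  have h := (hA.hasFDerivAt_phi hm (xcur x d 0)).comp_hasDerivAt 0 (hasDerivAt_xcur hx d)
  rwa [xcur_zero hx] at h

lemma inner_apply_rightInverse_pos {E : Type*} [NormedAddCommGroup E] [InnerProductSpace ℝ E]
    {B C : E →L[ℝ] E} (hBpd : ∀ v, v ≠ 0 → 0 < ⟪v, B v⟫) (hBC : ∀ v, B (C v) = v)
    {v : E} (hv : v ≠ 0) : 0 < ⟪v, C v⟫ := by
  have hCv : C v ≠ 0 := fun h => hv (by rw [← hBC v, h, map_zero])
  simpa [hBC, real_inner_comm] using hBpd (C v) hCv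

lemma HasDerivAt.exists_lt_add_mul_of_deriv_lt {g : ℝ → ℝ} {g' a : ℝ} (hg : HasDerivAt g g' 0)
    (ha : g' < a) : ∃ αbar > 0, ∀ α ∈ Set.Ioc (0 : ℝ) αbar, g α < g 0 + a * α := by
  have hev : ∀ᶠ α in nhdsWithin 0 (Set.Ioi 0), α⁻¹ • (g (0 + α) - g 0) < a :=
    hg.tendsto_slope_zero_right.eventually_lt_const ha
  obtain ⟨αbar, hαbar, hsub⟩ := mem_nhdsGT_iff_exists_Ioc_subset.mp hev
  refine ⟨αbar, hαbar, fun α hα => ?_⟩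
  have hslope : α⁻¹ * (g α - g 0) < a := by simpa using hsub hα
  rw [inv_mul_lt_iff₀ hα.1] at hslope
  linarith

theorem stmt3_general {m n : ℕ} (hm : 2 ≤ m) (A : Tensor m n) (hA : IsSymmTensor A)
    (x : Euc n) (hx : ‖x‖ = 1) (hFx : Fvec A hm x ≠ 0)
    (B : Euc n →L[ℝ] Euc n)
    (hBpd : ∀ v : Euc n, v ≠ 0 → 0 < ⟪v, B v⟫)
    (Binv : Euc n →L[ℝ] Euc n) (hBinv : ∀ v, B (Binv v) = v)
    (d : Euc n) (hd : d = -(Binv (Fvec A hm x))) :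
    ⟪tvec A hm x, Pproj x d⟫ = -⟪Fvec A hm x, Binv (Fvec A hm x)⟫ ∧
    ⟪tvec A hm x, Pproj x d⟫ < 0 ∧
    ∀ σ ∈ Set.Ioo (0 : ℝ) 1, ∃ αbar > 0, ∀ α ∈ Set.Ioc (0 : ℝ) αbar,
      phi A (xcur x d α) ≤ phi A x - σ * α * ⟪Fvec A hm x, Binv (Fvec A hm x)⟫ ∧
      phi A (xcur x d α) < phi A x := by
  set c := ⟪Fvec A hm x, Binv (Fvec A hm x)⟫
  have hc : 0 < c := inner_apply_rightInverse_pos hBpd hBinv hFx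
  have hslope : ⟪tvec A hm x, Pproj x d⟫ = -c := by
    rw [inner_tvec_Pproj, hd, inner_neg_right]
  refine ⟨hslope, by linarith, fun σ hσ => ?_⟩
  have hderiv := hA.hasDerivAt_phi_xcur hm hx d
  rw [hslope] at hderiv
  obtain ⟨αbar, hαbar, hbelow⟩ :=
    hderiv.exists_lt_add_mul_of_deriv_lt (a := -(σ * c)) (by nlinarith [hσ.2])
  refine ⟨αbar, hαbar, fun α hα => ?_⟩
  have h := hbelow α hα
  rw [xcur_zero hx] at h
  have hdecrease : 0 < σ * α * c := mul_pos (mul_pos hσ.1 hα.1) hc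
  exact ⟨by linarith, by linarith⟩

/-- for a symmetric positive definite `B` and `d = -B⁻¹ F(x)` at a non-eigenvector
`x`, one has `⟪A x^{m-1}, P_x d⟫ = -⟪F(x), B⁻¹ F(x)⟫ < 0`, and `d` is a curve descent
direction of `φ` at `x` satisfying the Armijo-type inequality for small `α`. -/
theorem stmt3 {m n : ℕ} (hn : 1 ≤ n) (hm : 2 ≤ m) (A : Tensor m n) (hA : IsSymmTensor A)
    (x : Euc n) (hx : ‖x‖ = 1) (hFx : Fvec A hm x ≠ 0)
    (B : Euc n →L[ℝ] Euc n) (hBsa : IsSelfAdjoint B)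
    (hBpd : ∀ v : Euc n, v ≠ 0 → 0 < ⟪v, B v⟫)
    (Binv : Euc n →L[ℝ] Euc n) (hBinv : ∀ v, B (Binv v) = v) (hBinv' : ∀ v, Binv (B v) = v)
    (d : Euc n) (hd : d = -(Binv (Fvec A hm x))) :
    ⟪tvec A hm x, Pproj x d⟫ = -⟪Fvec A hm x, Binv (Fvec A hm x)⟫ ∧
    ⟪tvec A hm x, Pproj x d⟫ < 0 ∧
    ∀ σ ∈ Set.Ioo (0 : ℝ) 1, ∃ αbar > 0, ∀ α ∈ Set.Ioc (0 : ℝ) αbar,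
      phi A (xcur x d α) ≤ phi A x - σ * α * ⟪Fvec A hm x, Binv (Fvec A hm x)⟫ ∧
      phi A (xcur x d α) < phi A x :=
  stmt3_general hm A hA x hx hFx B hBpd Binv hBinv d hd
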